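/- arXiv:math/0208245 — 2 statements merged into one kernel-verified Lean document; each statement's English description precedes it below -/
import Mathlib

section
/- Let f : ℝ² → ℝ be smooth near 0 and suppose that the function c ↦ f(c) · ln|c| (defined on ℝ² \ {0}, where |c| denotes the Euclidean norm) extends to a smooth function in a neighbourhood of 0. Then f is flat at 0, i.e., f and all its partial derivatives vanish at the origin. -/
open Real Metric Set Filter Topology



noncomputable def LL : ℂ → ℝ := fun c => Real.log ‖c‖

lemma hLL : ContDiffOn ℝ (⊤ : ℕ∞) LL {(0:ℂ)}ᶜ := by
  intro c hc
  have hc' : c ≠ 0 := hc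
  exact (((contDiffAt_norm (𝕜 := ℂ) hc').log (norm_ne_zero_iff.2 hc'))).contDiffWithinAt

lemma Lopen : IsOpen {(0:ℂ)}ᶜ := isOpen_compl_singleton

lemma logDerivBound (j : ℕ) (hj : j ≠ 0) :
    ∃ K : ℝ, 0 ≤ K ∧ ∀ c : ℂ, c ≠ 0 → ‖iteratedFDeriv ℝ j LL c‖ ≤ K * ‖c‖⁻¹ ^ j := by
  have hcont : ContinuousOn (iteratedFDeriv ℝ j LL) {(0:ℂ)}ᶜ := by
    have h1 : ContinuousOn (iteratedFDerivWithin ℝ j LL {(0:ℂ)}ᶜ) {(0:ℂ)}ᶜ :=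
      hLL.continuousOn_iteratedFDerivWithin (by exact_mod_cast le_top) Lopen.uniqueDiffOn
    exact h1.congr fun x hx => (iteratedFDerivWithin_of_isOpen j Lopen hx).symm
  obtain ⟨K, hK⟩ := (isCompact_sphere (0:ℂ) 1).exists_bound_of_continuousOn
    (hcont.mono fun x hx => by
      simp only [mem_sphere_iff_norm, sub_zero] at hx
      simp only [mem_compl_iff, mem_singleton_iff]
      intro h; rw [h] at hx; simp at hx)
  refine ⟨max K 0, le_max_right _ _, fun c hc => ?_⟩
  set t : ℝ := ‖c‖ with ht
  have ht0 : 0 < t := norm_pos_iff.2 hc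
  set c' : ℂ := (t⁻¹ : ℝ) • c with hc'def
  have hc1 : ‖c'‖ = 1 := by
    rw [hc'def, norm_smul, Real.norm_eq_abs, abs_of_pos (inv_pos.2 ht0)]
    exact inv_mul_cancel₀ ht0.ne'
  have hc'0 : c' ≠ 0 := by
    intro h; rw [h] at hc1; simp at hc1
  set σ : ℂ →L[ℝ] ℂ := t • ContinuousLinearMap.id ℝ ℂ with hσ
  have hσc' : σ c' = c := by
    simp only [hσ, hc'def, ContinuousLinearMap.smul_apply, ContinuousLinearMap.id_apply]
    rw [smul_smul, mul_inv_cancel₀ ht0.ne', one_smul]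
  have hpre : σ ⁻¹' {(0:ℂ)}ᶜ = {(0:ℂ)}ᶜ := by
    ext x
    simp only [mem_preimage, mem_compl_iff, mem_singleton_iff, hσ]
    constructor
    · intro h hx; apply h; simp [hx]
    · intro h hx; apply h
      have : t • x = 0 := hx
      rcases smul_eq_zero.1 this with h1 | h2
      · exact absurd h1 ht0.ne'
      · exact h2
  have hcomp : iteratedFDerivWithin ℝ j (LL ∘ σ) {(0:ℂ)}ᶜ c'
      = (iteratedFDerivWithin ℝ j LL {(0:ℂ)}ᶜ (σ c')).compContinuousLinearMap fun _ => σ := by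
    have := σ.iteratedFDerivWithin_comp_right (f := LL) (s := {(0:ℂ)}ᶜ) hLL
      Lopen.uniqueDiffOn (by rw [hpre]; exact Lopen.uniqueDiffOn)
      (by rw [hσc']; exact hc) (i := j) (by exact_mod_cast le_top)
    rw [hpre] at this
    exact this
  have heq : Set.EqOn (LL ∘ σ) (fun x => Real.log t + LL x) {(0:ℂ)}ᶜ := by
    intro x hx
    have hx' : x ≠ 0 := hx
    simp only [Function.comp_apply, LL, hσ]
    show Real.log ‖t • x‖ = Real.log t + Real.log ‖x‖
    rw [norm_smul, Real.norm_eq_abs, abs_of_pos ht0,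
      Real.log_mul ht0.ne' (norm_ne_zero_iff.2 hx')]
  have hadd : iteratedFDerivWithin ℝ j (fun x => Real.log t + LL x) {(0:ℂ)}ᶜ c'
      = iteratedFDerivWithin ℝ j LL {(0:ℂ)}ᶜ c' := by
    rw [show (fun x : ℂ => Real.log t + LL x) = (fun _ : ℂ => Real.log t) + LL from rfl]
    have h1 := iteratedFDerivWithin_add_apply (f := fun _ : ℂ => Real.log t) (g := LL)
      (i := j) contDiffWithinAt_const (hLL.of_le (by exact_mod_cast le_top) c' hc'0)
      Lopen.uniqueDiffOn (show c' ∈ {(0:ℂ)}ᶜ from hc'0)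
    rw [h1, iteratedFDerivWithin_const_of_ne hj, Pi.zero_apply, zero_add]
  have hsmul : (iteratedFDerivWithin ℝ j LL {(0:ℂ)}ᶜ (σ c')).compContinuousLinearMap
      (fun _ => σ) = (t ^ j) • iteratedFDerivWithin ℝ j LL {(0:ℂ)}ᶜ (σ c') := by
    ext v
    simp only [ContinuousMultilinearMap.compContinuousLinearMap_apply,
      ContinuousMultilinearMap.smul_apply]
    have : (fun i : Fin j => σ (v i)) = fun i : Fin j => t • v i := by
      funext i; simp [hσ]
    rw [this, show (fun i : Fin j => t • v i) = fun i => (fun _ : Fin j => t) i • v i from rfl,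
      ContinuousMultilinearMap.map_smul_univ]
    simp
  have key : t ^ j * ‖iteratedFDerivWithin ℝ j LL {(0:ℂ)}ᶜ (σ c')‖ ≤ K := by
    have h2 : ‖iteratedFDerivWithin ℝ j LL {(0:ℂ)}ᶜ c'‖ ≤ K := by
      rw [iteratedFDerivWithin_of_isOpen j Lopen (show c' ∈ {(0:ℂ)}ᶜ from hc'0)]
      exact hK c' (by simp [mem_sphere_iff_norm, hc1])
    calc t ^ j * ‖iteratedFDerivWithin ℝ j LL {(0:ℂ)}ᶜ (σ c')‖
        = ‖(t ^ j) • iteratedFDerivWithin ℝ j LL {(0:ℂ)}ᶜ (σ c')‖ := by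
          rw [norm_smul (t ^ j) (iteratedFDerivWithin ℝ j LL {(0:ℂ)}ᶜ (σ c')),
            Real.norm_eq_abs, abs_of_pos (pow_pos ht0 j)]
      _ = ‖iteratedFDerivWithin ℝ j (LL ∘ σ) {(0:ℂ)}ᶜ c'‖ := by rw [hcomp, hsmul]
      _ = ‖iteratedFDerivWithin ℝ j LL {(0:ℂ)}ᶜ c'‖ := by
          rw [iteratedFDerivWithin_congr heq (show c' ∈ {(0:ℂ)}ᶜ from hc'0), hadd]
      _ ≤ K := h2
  have hglob : iteratedFDerivWithin ℝ j LL {(0:ℂ)}ᶜ (σ c') = iteratedFDeriv ℝ j LL c := by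
    rw [hσc']; exact iteratedFDerivWithin_of_isOpen j Lopen hc
  rw [hglob] at key
  have : ‖iteratedFDeriv ℝ j LL c‖ ≤ K * t⁻¹ ^ j := by
    rw [inv_pow]
    calc ‖iteratedFDeriv ℝ j LL c‖ = t ^ j * ‖iteratedFDeriv ℝ j LL c‖ * (t ^ j)⁻¹ := by
          field_simp
      _ ≤ K * (t ^ j)⁻¹ := by
          apply mul_le_mul_of_nonneg_right key (by positivity)
  exact this.trans (by apply mul_le_mul_of_nonneg_right (le_max_left _ _) (by positivity))


lemma flat_bound (r : ℝ) (hr : 0 < r) :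
    ∀ (m : ℕ) {E : Type} [NormedAddCommGroup E] [NormedSpace ℝ E] (φ : ℂ → E),
    ContDiffOn ℝ (⊤ : ℕ∞) φ (ball (0:ℂ) r) → (∀ j, j < m → iteratedFDeriv ℝ j φ 0 = 0) →
    ∃ C : ℝ, 0 ≤ C ∧ ∀ k ≤ m, ∀ c ∈ ball (0:ℂ) (r/2),
      ‖iteratedFDeriv ℝ k φ c‖ ≤ C * ‖c‖ ^ (m - k) := by
  intro m
  induction m with
  | zero =>
    intro E _ _ φ hφ _
    have hsub : closedBall (0:ℂ) (r/2) ⊆ ball 0 r :=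
      (closedBall_subset_ball (by linarith))
    obtain ⟨C, hC⟩ := (isCompact_closedBall (0:ℂ) (r/2)).exists_bound_of_continuousOn
      ((hφ.continuousOn).mono hsub)
    refine ⟨max C 0, le_max_right _ _, fun k hk c hc => ?_⟩
    interval_cases k
    simp only [Nat.zero_sub, pow_zero, mul_one, norm_iteratedFDeriv_zero]
    exact (hC c (ball_subset_closedBall hc)).trans (le_max_left _ _)
  | succ m IH =>
    intro E _ _ φ hφ h0
    have hdiff : DifferentiableOn ℝ φ (ball (0:ℂ) r) :=
      hφ.differentiableOn (by simp)
    have hφ' : ContDiffOn ℝ (⊤ : ℕ∞) (fderiv ℝ φ) (ball (0:ℂ) r) :=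
      ((contDiffOn_infty_iff_fderiv_of_isOpen isOpen_ball).1 hφ).2
    have h0' : ∀ j, j < m → iteratedFDeriv ℝ j (fderiv ℝ φ) 0 = 0 := by
      intro j hj
      rw [← norm_eq_zero, norm_iteratedFDeriv_fderiv, norm_eq_zero]
      exact h0 (j + 1) (by omega)
    obtain ⟨C, hC0, hC⟩ := IH (fderiv ℝ φ) hφ' h0'
    refine ⟨C, hC0, fun k hk c hc => ?_⟩
    match k with
    | (k' + 1) =>
      rw [← norm_iteratedFDeriv_fderiv]
      have := hC k' (by omega) c hc
      simpa [Nat.succ_sub_succ] using this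
    | 0 =>
      have hφ0 : φ 0 = 0 := by
        have := h0 0 (by omega)
        have h2 : iteratedFDeriv ℝ 0 φ 0 (fun _ => 0) = φ 0 := iteratedFDeriv_zero_apply _
        rw [this] at h2
        simpa using h2.symm
      rw [norm_iteratedFDeriv_zero, Nat.sub_zero]
      rcases eq_or_ne c 0 with rfl | hc0
      · simp [hφ0]
      · have hcball : closedBall (0:ℂ) ‖c‖ ⊆ ball (0:ℂ) (r/2) := by
          intro x hx
          simp only [mem_closedBall, dist_zero_right] at hx
          simp only [mem_ball, dist_zero_right] at hc ⊢
          exact lt_of_le_of_lt hx hc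
        have hbd : ∀ x ∈ closedBall (0:ℂ) ‖c‖, ‖fderiv ℝ φ x‖ ≤ C * ‖c‖ ^ m := by
          intro x hx
          have h1 : ‖iteratedFDeriv ℝ 0 (fderiv ℝ φ) x‖ ≤ C * ‖x‖ ^ m := by
            simpa using hC 0 (by omega) x (hcball hx)
          rw [norm_iteratedFDeriv_zero] at h1
          refine h1.trans (mul_le_mul_of_nonneg_left ?_ hC0)
          exact pow_le_pow_left₀ (norm_nonneg _) (by simpa [dist_zero_right] using hx) m
        have hdiff' : ∀ x ∈ closedBall (0:ℂ) ‖c‖, DifferentiableAt ℝ φ x := by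
          intro x hx
          have hxball : x ∈ ball (0:ℂ) r := ball_subset_ball (by linarith) (hcball hx)
          exact (hdiff.differentiableAt (isOpen_ball.mem_nhds hxball))
        have := (convex_closedBall (0:ℂ) ‖c‖).norm_image_sub_le_of_norm_fderiv_le
          hdiff' hbd (mem_closedBall_self (norm_nonneg c)) (by rw [mem_closedBall, dist_zero_right])
        rw [hφ0, sub_zero, sub_zero] at this
        calc ‖φ c‖ ≤ C * ‖c‖ ^ m * ‖c‖ := this
          _ = C * ‖c‖ ^ (m + 1) := by ring

/-- If f is smooth near 0 ∈ ℝ² ≅ ℂ and c ↦ f(c)·ln|c| extends to a smooth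
function g near 0, then f is flat at 0. -/
theorem flat_of_log_smooth (f g : ℂ → ℝ) (U : Set ℂ) (hU : U ∈ nhds (0 : ℂ))
    (hf : ContDiffOn ℝ (⊤ : ℕ∞) f U) (hg : ContDiffOn ℝ (⊤ : ℕ∞) g U)
    (hfg : ∀ c ∈ U, c ≠ 0 → g c = f c * Real.log ‖c‖) :
    ∀ n : ℕ, iteratedFDeriv ℝ n f 0 = 0 := by
  obtain ⟨ε, hε, hballU⟩ := Metric.mem_nhds_iff.1 hU
  set r : ℝ := min ε (Real.exp (-1)) with hrdef
  have hr : 0 < r := lt_min hε (Real.exp_pos _)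
  have hrexp : r ≤ Real.exp (-1) := min_le_right _ _
  have hballU' : ball (0:ℂ) r ⊆ U := (ball_subset_ball (min_le_left _ _)).trans hballU
  have hf' : ContDiffOn ℝ (⊤ : ℕ∞) f (ball 0 r) := (hf.of_le (by simp)).mono hballU'
  have hg' : ContDiffOn ℝ (⊤ : ℕ∞) g (ball 0 r) := (hg.of_le (by simp)).mono hballU'
  set s : Set ℂ := ball (0:ℂ) r ∩ {(0:ℂ)}ᶜ with hsdef
  have hsopen : IsOpen s := isOpen_ball.inter isOpen_compl_singleton
  have hsU : UniqueDiffOn ℝ s := hsopen.uniqueDiffOn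
  have hfs : ContDiffOn ℝ (⊤ : ℕ∞) f s := hf'.mono inter_subset_left
  have hgs : ContDiffOn ℝ (⊤ : ℕ∞) g s := hg'.mono inter_subset_left
  have hLs : ContDiffOn ℝ (⊤ : ℕ∞) LL s := hLL.mono inter_subset_right
  have hlogneg : ∀ c : ℂ, c ∈ ball (0:ℂ) r → c ≠ 0 → Real.log ‖c‖ < -1 := by
    intro c hc hc0
    have h1 : ‖c‖ < Real.exp (-1) := lt_of_lt_of_le (by simpa [dist_zero_right] using hc) hrexp
    calc Real.log ‖c‖ < Real.log (Real.exp (-1)) :=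
          Real.log_lt_log (norm_pos_iff.2 hc0) h1
      _ = -1 := Real.log_exp _
  -- choice of constants for log derivatives
  have hKex : ∀ j : ℕ, ∃ K : ℝ, 0 ≤ K ∧ ∀ c : ℂ, c ≠ 0 → j ≠ 0 →
      ‖iteratedFDeriv ℝ j LL c‖ ≤ K * ‖c‖⁻¹ ^ j := by
    intro j
    by_cases hj : j = 0
    · exact ⟨0, le_rfl, fun c _ h => absurd hj h⟩
    · obtain ⟨K, h0, hb⟩ := logDerivBound j hj
      exact ⟨K, h0, fun c hc _ => hb c hc⟩
  choose K hK0 hKb using hKex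
  -- continuity of iterated derivatives at 0
  have hcont : ∀ (φ : ℂ → ℝ), ContDiffOn ℝ (⊤ : ℕ∞) φ (ball (0:ℂ) r) → ∀ n : ℕ,
      ContinuousAt (iteratedFDeriv ℝ n φ) 0 := by
    intro φ hφ n
    have h1 : ContinuousOn (iteratedFDerivWithin ℝ n φ (ball (0:ℂ) r)) (ball (0:ℂ) r) :=
      hφ.continuousOn_iteratedFDerivWithin (by exact_mod_cast le_top) isOpen_ball.uniqueDiffOn
    have h2 : ContinuousOn (iteratedFDeriv ℝ n φ) (ball (0:ℂ) r) :=
      h1.congr fun x hx => (iteratedFDerivWithin_of_isOpen n isOpen_ball hx).symm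
    exact h2.continuousAt (isOpen_ball.mem_nhds (mem_ball_self hr))
  haveI : (𝓝[≠] (0:ℂ)).NeBot := Module.punctured_nhds_neBot ℝ ℂ 0
  have hle : ∀ m : ℕ, (m : WithTop ℕ∞) ≤ ((⊤ : ℕ∞) : WithTop ℕ∞) := fun m => by
    exact_mod_cast le_top
  have key : ∀ n : ℕ, iteratedFDeriv ℝ n f 0 = 0 ∧ iteratedFDeriv ℝ n g 0 = 0 := by
    intro n
    induction n using Nat.strong_induction_on with
    | _ n IH =>
    obtain ⟨Cf, hCf0, hCf⟩ := flat_bound r hr n f hf' (fun j hj => (IH j hj).1)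
    obtain ⟨Cg, hCg0, hCg⟩ := flat_bound r hr n g hg' (fun j hj => (IH j hj).2)
    -- the first key bound
    have keybound : ∀ c : ℂ, c ∈ ball (0:ℂ) (r/2) → c ≠ 0 →
        ‖iteratedFDeriv ℝ n f c‖ ≤
          (Cg + ∑ i ∈ Finset.range n, (n.choose i : ℝ) * Cf * K (n - i)) *
            (-Real.log ‖c‖)⁻¹ := by
      intro c hc2 hc0
      have hcball : c ∈ ball (0:ℂ) r := ball_subset_ball (by linarith) hc2
      have hcs : c ∈ s := ⟨hcball, hc0⟩
      set a : ℝ := Real.log ‖c‖ with hadef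
      have ha1 : a < -1 := hlogneg c hcball hc0
      have ha0 : a < 0 := by linarith
      have hgeq : Set.EqOn g (fun x => f x * (LL x - a) + a • f x) s := by
        intro x hx
        have := hfg x (hballU' hx.1) hx.2
        simp only [LL, smul_eq_mul]
        rw [this]; ring
      have hLma : ContDiffOn ℝ (⊤ : ℕ∞) (fun x => LL x - a) s := hLs.sub contDiffOn_const
      have hmul : ContDiffOn ℝ (⊤ : ℕ∞) (fun x => f x * (LL x - a)) s := hfs.mul hLma
      have hsmulf : ContDiffOn ℝ (⊤ : ℕ∞) (fun x => a • f x) s := by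
        simpa [smul_eq_mul] using contDiffOn_const (c := a).mul hfs
      have hDng : iteratedFDerivWithin ℝ n g s c =
          iteratedFDerivWithin ℝ n (fun x => f x * (LL x - a)) s c +
            a • iteratedFDerivWithin ℝ n f s c := by
        rw [iteratedFDerivWithin_congr hgeq hcs n]
        rw [iteratedFDerivWithin_add_apply' (hmul.of_le (hle n) c hcs)
          (hsmulf.of_le (hle n) c hcs) hsU hcs]
        congr 1
        have := iteratedFDerivWithin_const_smul_apply (𝕜 := ℝ) (a := a)
          (hfs.of_le (hle n) c hcs) hsU hcs
        exact this
      have hmulbound : ‖iteratedFDerivWithin ℝ n (fun x => f x * (LL x - a)) s c‖ ≤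
          ∑ i ∈ Finset.range n, (n.choose i : ℝ) * Cf * K (n - i) := by
        have h1 := norm_iteratedFDerivWithin_mul_le (𝕜 := ℝ)
          (hfs.of_le (le_refl _)) (hLma.of_le (le_refl _)) hsU hcs
          (n := n) (hle n)
        refine h1.trans ?_
        rw [Finset.sum_range_succ]
        have hlast : (n.choose n : ℝ) * ‖iteratedFDerivWithin ℝ n f s c‖ *
            ‖iteratedFDerivWithin ℝ (n - n) (fun x => LL x - a) s c‖ = 0 := by
          rw [Nat.sub_self, norm_iteratedFDerivWithin_zero]
          have hz : LL c - a = 0 := by simp [LL, hadef]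
          rw [hz]
          simp
        rw [hlast, add_zero]
        apply Finset.sum_le_sum
        intro i hi
        have hin : i < n := Finset.mem_range.1 hi
        have hni : n - i ≠ 0 := by omega
        have e1 : ‖iteratedFDerivWithin ℝ i f s c‖ ≤ Cf * ‖c‖ ^ (n - i) := by
          rw [iteratedFDerivWithin_of_isOpen i hsopen hcs]
          exact hCf i (by omega) c hc2
        have e2 : iteratedFDerivWithin ℝ (n - i) (fun x => LL x - a) s c =
            iteratedFDeriv ℝ (n - i) LL c := by
          have hsplit : iteratedFDerivWithin ℝ (n - i) (fun x => LL x + (-a)) s c =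
              iteratedFDerivWithin ℝ (n - i) LL s c +
                iteratedFDerivWithin ℝ (n - i) (fun _ : ℂ => -a) s c :=
            iteratedFDerivWithin_add_apply' (hLs.of_le (hle (n - i)) c hcs)
              contDiffWithinAt_const hsU hcs
          simp only [sub_eq_add_neg]
          rw [hsplit, iteratedFDerivWithin_const_of_ne hni, Pi.zero_apply, add_zero]
          exact iteratedFDerivWithin_of_isOpen _ hsopen hcs
        have e3 : ‖iteratedFDeriv ℝ (n - i) LL c‖ ≤ K (n - i) * ‖c‖⁻¹ ^ (n - i) :=
          hKb (n - i) c hc0 hni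
        calc (n.choose i : ℝ) * ‖iteratedFDerivWithin ℝ i f s c‖ *
              ‖iteratedFDerivWithin ℝ (n - i) (fun x => LL x - a) s c‖
            ≤ (n.choose i : ℝ) * (Cf * ‖c‖ ^ (n - i)) * (K (n - i) * ‖c‖⁻¹ ^ (n - i)) := by
              apply mul_le_mul
              · exact mul_le_mul le_rfl e1 (norm_nonneg _) (by positivity)
              · rw [e2]; exact e3
              · exact norm_nonneg _
              · positivity
          _ = (n.choose i : ℝ) * Cf * K (n - i) * (‖c‖ ^ (n - i) * ‖c‖⁻¹ ^ (n - i)) := by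
              ring
          _ = (n.choose i : ℝ) * Cf * K (n - i) := by
              rw [inv_pow, mul_inv_cancel₀ (pow_ne_zero _ (norm_ne_zero_iff.2 hc0)), mul_one]
      have hgbound : ‖iteratedFDerivWithin ℝ n g s c‖ ≤ Cg := by
        rw [iteratedFDerivWithin_of_isOpen n hsopen hcs]
        have := hCg n le_rfl c hc2
        simpa using this
      have hsmuleq : a • iteratedFDerivWithin ℝ n f s c =
          iteratedFDerivWithin ℝ n g s c -
            iteratedFDerivWithin ℝ n (fun x => f x * (LL x - a)) s c := by
        rw [hDng]; abel
      have hnorm1 : (-a) * ‖iteratedFDeriv ℝ n f c‖ ≤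
          Cg + ∑ i ∈ Finset.range n, (n.choose i : ℝ) * Cf * K (n - i) := by
        have h2 : ‖a • iteratedFDerivWithin ℝ n f s c‖ =
            (-a) * ‖iteratedFDerivWithin ℝ n f s c‖ := by
          rw [norm_smul a (iteratedFDerivWithin ℝ n f s c), Real.norm_eq_abs, abs_of_neg ha0]
        rw [← iteratedFDerivWithin_of_isOpen n hsopen hcs (f := f), ← h2, hsmuleq]
        exact (norm_sub_le _ _).trans (add_le_add hgbound hmulbound)
      have hA0 : (0:ℝ) ≤ Cg + ∑ i ∈ Finset.range n, (n.choose i : ℝ) * Cf * K (n - i) := by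
        apply add_nonneg hCg0
        apply Finset.sum_nonneg
        intro i _
        have := hK0 (n - i)
        positivity
      have hma : (0:ℝ) < -a := by linarith
      calc ‖iteratedFDeriv ℝ n f c‖
          = ((-a) * ‖iteratedFDeriv ℝ n f c‖) * (-a)⁻¹ := by
            rw [mul_comm (-a) ‖iteratedFDeriv ℝ n f c‖, mul_inv_cancel_right₀ hma.ne']
        _ ≤ (Cg + ∑ i ∈ Finset.range n, (n.choose i : ℝ) * Cf * K (n - i)) * (-a)⁻¹ := by
            apply mul_le_mul_of_nonneg_right hnorm1 (by positivity)
    -- conclude derivative of f vanishes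
    have htendsf : Tendsto (fun c : ℂ => -Real.log ‖c‖) (𝓝[≠] (0:ℂ)) atTop := by
      have h3 : Tendsto (fun c : ℂ => ‖c‖) (𝓝[≠] (0:ℂ)) (𝓝[>] (0:ℝ)) := by
        rw [tendsto_nhdsWithin_iff]
        constructor
        · have := (continuous_norm (E := ℂ)).tendsto 0
          simpa using this.mono_left nhdsWithin_le_nhds
        · exact eventually_mem_nhdsWithin.mono fun c hc => norm_pos_iff.2 hc
      exact tendsto_neg_atBot_atTop.comp (Real.tendsto_log_nhdsGT_zero.comp h3)
    have hfn : iteratedFDeriv ℝ n f 0 = 0 := by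
      have hsq : Tendsto (iteratedFDeriv ℝ n f) (𝓝[≠] (0:ℂ)) (𝓝 0) := by
        apply squeeze_zero_norm'
          (a := fun c : ℂ => (Cg + ∑ i ∈ Finset.range n, (n.choose i : ℝ) * Cf * K (n - i)) *
            (-Real.log ‖c‖)⁻¹)
        · filter_upwards [self_mem_nhdsWithin,
            mem_nhdsWithin_of_mem_nhds (ball_mem_nhds (0:ℂ) (half_pos hr))] with c hc0 hcb
          exact keybound c hcb hc0
        · have := htendsf.inv_tendsto_atTop
          have h4 := this.const_mul
            (Cg + ∑ i ∈ Finset.range n, (n.choose i : ℝ) * Cf * K (n - i))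
          simpa using h4
      have h5 : Tendsto (iteratedFDeriv ℝ n f) (𝓝[≠] (0:ℂ))
          (𝓝 (iteratedFDeriv ℝ n f 0)) :=
        ((hcont f hf' n).continuousWithinAt)
      exact tendsto_nhds_unique h5 hsq
    -- now the second key bound, for g
    obtain ⟨Cf', hCf'0, hCf'⟩ := flat_bound r hr (n+1) f hf' (by
      intro j hj
      rcases Nat.lt_succ_iff_lt_or_eq.1 hj with h | rfl
      · exact (IH j h).1
      · exact hfn)
    have keybound2 : ∀ c : ℂ, c ∈ ball (0:ℂ) (r/2) → c ≠ 0 →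
        ‖iteratedFDeriv ℝ n g c‖ ≤
          (∑ i ∈ Finset.range n, (n.choose i : ℝ) * Cf' * K (n - i)) * ‖c‖ +
            Cf' * (-(‖c‖ * Real.log ‖c‖)) := by
      intro c hc2 hc0
      have hcball : c ∈ ball (0:ℂ) r := ball_subset_ball (by linarith) hc2
      have hcs : c ∈ s := ⟨hcball, hc0⟩
      have ha1 : Real.log ‖c‖ < -1 := hlogneg c hcball hc0
      have ha0 : Real.log ‖c‖ < 0 := by linarith
      have hgeq : Set.EqOn g (fun x => f x * LL x) s := by
        intro x hx
        exact hfg x (hballU' hx.1) hx.2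
      have h1 := norm_iteratedFDerivWithin_mul_le (𝕜 := ℝ)
        (hfs.of_le (le_refl _)) (hLs.of_le (le_refl _)) hsU hcs
        (n := n) (hle n)
      have hgd : ‖iteratedFDeriv ℝ n g c‖ ≤
          ∑ i ∈ Finset.range (n+1), (n.choose i : ℝ) * ‖iteratedFDerivWithin ℝ i f s c‖ *
            ‖iteratedFDerivWithin ℝ (n - i) LL s c‖ := by
        rw [← iteratedFDerivWithin_of_isOpen n hsopen hcs,
          iteratedFDerivWithin_congr hgeq hcs n]
        exact h1
      refine hgd.trans ?_
      rw [Finset.sum_range_succ]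
      have hlastbd : (n.choose n : ℝ) * ‖iteratedFDerivWithin ℝ n f s c‖ *
          ‖iteratedFDerivWithin ℝ (n - n) LL s c‖ ≤ Cf' * (-(‖c‖ * Real.log ‖c‖)) := by
        rw [Nat.sub_self, norm_iteratedFDerivWithin_zero, Nat.choose_self, Nat.cast_one, one_mul]
        have e1 : ‖iteratedFDerivWithin ℝ n f s c‖ ≤ Cf' * ‖c‖ := by
          rw [iteratedFDerivWithin_of_isOpen n hsopen hcs]
          have := hCf' n (by omega) c hc2
          simpa [Nat.succ_sub (le_refl n), Nat.sub_self] using this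
        have e2 : ‖LL c‖ = -Real.log ‖c‖ := by
          simp only [LL, Real.norm_eq_abs]
          rw [abs_of_neg ha0]
        calc ‖iteratedFDerivWithin ℝ n f s c‖ * ‖LL c‖
            ≤ (Cf' * ‖c‖) * (-Real.log ‖c‖) := by
              apply mul_le_mul e1 (le_of_eq e2) (norm_nonneg _) (by positivity)
          _ = Cf' * (-(‖c‖ * Real.log ‖c‖)) := by ring
      have hsumbd : ∑ i ∈ Finset.range n, (n.choose i : ℝ) *
            ‖iteratedFDerivWithin ℝ i f s c‖ * ‖iteratedFDerivWithin ℝ (n - i) LL s c‖ ≤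
          (∑ i ∈ Finset.range n, (n.choose i : ℝ) * Cf' * K (n - i)) * ‖c‖ := by
        rw [Finset.sum_mul]
        apply Finset.sum_le_sum
        intro i hi
        have hin : i < n := Finset.mem_range.1 hi
        have hni : n - i ≠ 0 := by omega
        have e1 : ‖iteratedFDerivWithin ℝ i f s c‖ ≤ Cf' * ‖c‖ ^ (n + 1 - i) := by
          rw [iteratedFDerivWithin_of_isOpen i hsopen hcs]
          exact hCf' i (by omega) c hc2
        have e2 : ‖iteratedFDerivWithin ℝ (n - i) LL s c‖ ≤ K (n - i) * ‖c‖⁻¹ ^ (n - i) := by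
          rw [iteratedFDerivWithin_of_isOpen _ hsopen hcs]
          exact hKb (n - i) c hc0 hni
        calc (n.choose i : ℝ) * ‖iteratedFDerivWithin ℝ i f s c‖ *
              ‖iteratedFDerivWithin ℝ (n - i) LL s c‖
            ≤ (n.choose i : ℝ) * (Cf' * ‖c‖ ^ (n + 1 - i)) * (K (n - i) * ‖c‖⁻¹ ^ (n - i)) := by
              apply mul_le_mul
              · exact mul_le_mul le_rfl e1 (norm_nonneg _) (by positivity)
              · exact e2
              · exact norm_nonneg _
              · positivity
          _ = (n.choose i : ℝ) * Cf' * K (n - i) *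
                (‖c‖ ^ (n + 1 - i) * ‖c‖⁻¹ ^ (n - i)) := by ring
          _ = (n.choose i : ℝ) * Cf' * K (n - i) * ‖c‖ := by
              congr 1
              rw [show n + 1 - i = (n - i) + 1 by omega, pow_succ, inv_pow,
                mul_comm (‖c‖ ^ (n-i)) ‖c‖, mul_assoc,
                mul_inv_cancel₀ (pow_ne_zero _ (norm_ne_zero_iff.2 hc0)), mul_one]
      linarith [hsumbd, hlastbd]
    have hgn : iteratedFDeriv ℝ n g 0 = 0 := by
      have hbcont : Continuous (fun c : ℂ =>
          (∑ i ∈ Finset.range n, (n.choose i : ℝ) * Cf' * K (n - i)) * ‖c‖ +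
            Cf' * (-(‖c‖ * Real.log ‖c‖))) := by
        have h6 : Continuous (fun c : ℂ => ‖c‖ * Real.log ‖c‖) :=
          Real.continuous_mul_log.comp continuous_norm
        fun_prop
      have hsq : Tendsto (iteratedFDeriv ℝ n g) (𝓝[≠] (0:ℂ)) (𝓝 0) := by
        apply squeeze_zero_norm'
          (a := fun c : ℂ =>
            (∑ i ∈ Finset.range n, (n.choose i : ℝ) * Cf' * K (n - i)) * ‖c‖ +
              Cf' * (-(‖c‖ * Real.log ‖c‖)))
        · filter_upwards [self_mem_nhdsWithin,
            mem_nhdsWithin_of_mem_nhds (ball_mem_nhds (0:ℂ) (half_pos hr))] with c hc0 hcb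
          exact keybound2 c hcb hc0
        · have h7 := (hbcont.tendsto 0).mono_left (nhdsWithin_le_nhds (s := {(0:ℂ)}ᶜ))
          simpa using h7
      have h5 : Tendsto (iteratedFDeriv ℝ n g) (𝓝[≠] (0:ℂ))
          (𝓝 (iteratedFDeriv ℝ n g 0)) :=
        ((hcont g hg' n).continuousWithinAt)
      exact tendsto_nhds_unique h5 hsq
    exact ⟨hfn, hgn⟩
  exact fun n => (key n).1
end

section
/- Let G = (G₁, G₂) : (ℝ², 0) → (ℝ², 0) be a smooth local diffeomorphism fixing the origin such that G₂(c₁, c₂) = c₂ and G₁ − c₁ (i.e., G₁(c) − c₁) is flat at the origin. Let σ be a smooth 1-form near 0 ∈ ℝ² and define τ = σ + Re(ln c) dc₁ − Im(ln c) dc₂ on a punctured neighbourhood (with c = c₁ + i c₂). If π := G*τ − τ has smooth coefficients near 0 after the logarithmic singularities cancel, then the coefficients of π are flat at 0. -/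
open Real Complex
open Asymptotics Filter Metric Set



private lemma abs_arctan_sub_le (a b : ℝ) :
    |Real.arctan a - Real.arctan b| ≤ |a - b| := by
  have h := Convex.norm_image_sub_le_of_norm_deriv_le (f := Real.arctan) (s := (univ : Set ℝ))
    (C := 1) (fun x _ => (Real.hasDerivAt_arctan x).differentiableAt)
    (fun x _ => by
      rw [(Real.hasDerivAt_arctan x).deriv]
      rw [Real.norm_eq_abs, _root_.abs_of_pos (by positivity)]
      rw [div_le_one (by positivity)]
      nlinarith [sq_nonneg x])
    convex_univ (mem_univ b) (mem_univ a)
  simpa using h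

private lemma arg_of_re_pos' {z : ℂ} (h : 0 < z.re) :
    Complex.arg z = Real.arctan (z.im / z.re) := by
  have h1 : |Complex.arg z| < Real.pi / 2 := Complex.abs_arg_lt_pi_div_two_iff.2 (Or.inl h)
  rw [abs_lt] at h1
  rw [← Complex.tan_arg z, Real.arctan_tan h1.1 h1.2]

private lemma arg_of_re_neg_im_nonneg' {z : ℂ} (hre : z.re < 0) (him : 0 ≤ z.im) :
    Complex.arg z = Real.arctan (z.im / z.re) + Real.pi := by
  have hz : z ≠ 0 := fun h => by simp [h] at hre
  have h0 : 0 ≤ Complex.arg z := Complex.arg_nonneg_iff.2 him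
  have h1 : Complex.arg z ≤ Real.pi := Complex.arg_le_pi z
  have hcos : Real.cos (Complex.arg z) < 0 := by
    rw [Complex.cos_arg hz]
    exact div_neg_of_neg_of_pos hre (norm_pos_iff.mpr hz)
  have h2 : Real.pi / 2 < Complex.arg z := by
    by_contra h
    push_neg at h
    exact absurd (Real.cos_nonneg_of_mem_Icc ⟨by linarith [pi_pos], h⟩) (not_le.2 hcos)
  have : Real.arctan (z.im / z.re) = Complex.arg z - Real.pi := by
    rw [← Complex.tan_arg z, ← Real.tan_sub_pi]
    exact Real.arctan_tan (by linarith) (by linarith [pi_pos])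
  linarith [this]

private lemma arg_of_re_neg_im_neg' {z : ℂ} (hre : z.re < 0) (him : z.im < 0) :
    Complex.arg z = Real.arctan (z.im / z.re) - Real.pi := by
  have hz : z ≠ 0 := fun h => by simp [h] at hre
  have h0 : Complex.arg z < 0 := Complex.arg_neg_iff.2 him
  have h1 : -Real.pi < Complex.arg z := Complex.neg_pi_lt_arg z
  have hcos : Real.cos (Complex.arg z) < 0 := by
    rw [Complex.cos_arg hz]
    exact div_neg_of_neg_of_pos hre (norm_pos_iff.mpr hz)
  have h2 : Complex.arg z < -(Real.pi / 2) := by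
    by_contra h
    push_neg at h
    exact absurd (Real.cos_nonneg_of_mem_Icc ⟨by linarith, by linarith [pi_pos]⟩)
      (not_le.2 hcos)
  have : Real.arctan (z.im / z.re) = Complex.arg z + Real.pi := by
    rw [← Complex.tan_arg z, ← Real.tan_add_pi]
    exact Real.arctan_tan (by linarith [pi_pos]) (by linarith)
  linarith [this]

private lemma arg_of_im_pos' {z : ℂ} (h : 0 < z.im) :
    Complex.arg z = Real.pi / 2 - Real.arctan (z.re / z.im) := by
  have h0 : 0 < Complex.arg z := by
    rcases lt_or_eq_of_le (Complex.arg_nonneg_iff.2 h.le) with h' | h'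
    · exact h'
    · exfalso
      have := Complex.arg_eq_zero_iff.1 h'.symm
      exact absurd this.2 (by linarith)
  have h1 : Complex.arg z < Real.pi := Complex.arg_lt_pi_iff.2 (Or.inr (by linarith))
  have : Real.arctan (z.re / z.im) = Real.pi / 2 - Complex.arg z := by
    have ht : Real.tan (Real.pi / 2 - Complex.arg z) = z.re / z.im := by
      rw [Real.tan_pi_div_two_sub, Complex.tan_arg, inv_div]
    rw [← ht]
    exact Real.arctan_tan (by linarith) (by linarith)
  linarith [this]

private lemma arg_of_im_neg' {z : ℂ} (h : z.im < 0) :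
    Complex.arg z = -(Real.pi / 2) - Real.arctan (z.re / z.im) := by
  have h0 : Complex.arg z < 0 := Complex.arg_neg_iff.2 h
  have h1 : -Real.pi < Complex.arg z := Complex.neg_pi_lt_arg z
  have : Real.arctan (z.re / z.im) = -(Real.pi / 2) - Complex.arg z := by
    have ht : Real.tan (-(Real.pi / 2) - Complex.arg z) = z.re / z.im := by
      have : -(Real.pi / 2) - Complex.arg z = Real.pi / 2 - (Complex.arg z + Real.pi) := by ring
      rw [this, Real.tan_pi_div_two_sub, Real.tan_add_pi, Complex.tan_arg, inv_div]
    rw [← ht]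
    exact Real.arctan_tan (by linarith) (by linarith)
  linarith [this]


private lemma arg_add_real_sub_arg (w : ℂ) (d : ℝ) (hw : w ≠ 0)
    (hd : |d| ≤ ‖w‖ / 4) :
    |Complex.arg (w + d) - Complex.arg w| ≤ 8 * |d| / ‖w‖ := by
  set z : ℂ := w + d with hz
  have hzim : z.im = w.im := by simp [hz]
  have hzre : z.re = w.re + d := by simp [hz]
  have hwpos : 0 < ‖w‖ := norm_pos_iff.mpr hw
  have him_le : |w.im| ≤ ‖w‖ := Complex.abs_im_le_norm w
  have hre_le : |w.re| ≤ ‖w‖ := Complex.abs_re_le_norm w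
  by_cases him : ‖w‖ / 2 ≤ |w.im|
  · -- imaginary part dominates
    have himne : w.im ≠ 0 := by
      intro h; rw [h] at him; simp at him; linarith
    have key : |Real.arctan (w.re / w.im) - Real.arctan (z.re / w.im)|
        ≤ 8 * |d| / ‖w‖ := by
      calc |Real.arctan (w.re / w.im) - Real.arctan (z.re / w.im)|
          ≤ |w.re / w.im - z.re / w.im| := abs_arctan_sub_le _ _
        _ = |d| / |w.im| := by
            have h1 : w.re / w.im - z.re / w.im = -d / w.im := by
              rw [hzre]; ring
            rw [h1, abs_div, abs_neg]
        _ ≤ |d| / (‖w‖ / 2) := by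
            apply div_le_div_of_nonneg_left (abs_nonneg d) (by linarith) him
        _ = 2 * |d| / ‖w‖ := by field_simp
        _ ≤ 8 * |d| / ‖w‖ := by
            gcongr
            linarith [abs_nonneg d]
    rcases lt_trichotomy w.im 0 with h | h | h
    · rw [arg_of_im_neg' (hzim ▸ h : z.im < 0), arg_of_im_neg' h, hzim]
      have : -(Real.pi / 2) - Real.arctan (z.re / w.im) -
          (-(Real.pi / 2) - Real.arctan (w.re / w.im))
          = Real.arctan (w.re / w.im) - Real.arctan (z.re / w.im) := by ring
      rw [this]; exact key
    · exact absurd h himne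
    · rw [arg_of_im_pos' (hzim ▸ h : 0 < z.im), arg_of_im_pos' h, hzim]
      have : Real.pi / 2 - Real.arctan (z.re / w.im) -
          (Real.pi / 2 - Real.arctan (w.re / w.im))
          = Real.arctan (w.re / w.im) - Real.arctan (z.re / w.im) := by ring
      rw [this]; exact key
  · -- real part dominates
    push_neg at him
    have hre2 : ‖w‖ / 2 ≤ |w.re| := by
      nlinarith [Complex.sq_norm w, Complex.normSq_apply w, abs_nonneg w.re, abs_nonneg w.im,
        _root_.sq_abs w.re, _root_.sq_abs w.im]
    have hzre4 : ‖w‖ / 4 ≤ |z.re| := by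
      rw [hzre]
      cases abs_cases w.re with
      | inl h => rw [_root_.abs_of_nonneg (by cases abs_cases d with
          | inl hd' => nlinarith | inr hd' => nlinarith)]
                 cases abs_cases d with
                 | inl hd' => nlinarith | inr hd' => nlinarith
      | inr h => rw [_root_.abs_of_nonpos (by cases abs_cases d with
          | inl hd' => nlinarith | inr hd' => nlinarith)]
                 cases abs_cases d with
                 | inl hd' => nlinarith | inr hd' => nlinarith
    have hsign : (0 < w.re ∧ 0 < z.re) ∨ (w.re < 0 ∧ z.re < 0) := by
      rcases lt_trichotomy w.re 0 with h | h | h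
      · right
        refine ⟨h, ?_⟩
        rw [hzre]
        cases abs_cases d with
        | inl hd' => nlinarith [_root_.abs_of_nonpos h.le]
        | inr hd' => nlinarith [_root_.abs_of_nonpos h.le]
      · exfalso; rw [h] at hre2; simp at hre2; linarith
      · left
        refine ⟨h, ?_⟩
        rw [hzre]
        cases abs_cases d with
        | inl hd' => nlinarith [_root_.abs_of_nonneg h.le]
        | inr hd' => nlinarith [_root_.abs_of_nonneg h.le]
    have key : |Real.arctan (z.im / z.re) - Real.arctan (w.im / w.re)|
        ≤ 8 * |d| / ‖w‖ := by
      have hwre : w.re ≠ 0 := by rcases hsign with ⟨h, _⟩ | ⟨h, _⟩ <;> [exact ne_of_gt h; exact ne_of_lt h]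
      have hzre' : z.re ≠ 0 := by rcases hsign with ⟨_, h⟩ | ⟨_, h⟩ <;> [exact ne_of_gt h; exact ne_of_lt h]
      calc |Real.arctan (z.im / z.re) - Real.arctan (w.im / w.re)|
          ≤ |z.im / z.re - w.im / w.re| := abs_arctan_sub_le _ _
        _ = |w.im| * |d| / (|w.re| * |z.re|) := by
            rw [hzim]
            have h1 : w.im / z.re - w.im / w.re = w.im * -d / (z.re * w.re) := by
              rw [div_sub_div _ _ hzre' hwre, hzre]
              ring_nf
            rw [h1, abs_div, abs_mul, abs_mul, abs_neg, mul_comm |z.re| |w.re|]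
        _ ≤ ‖w‖ * |d| / (‖w‖ / 2 * (‖w‖ / 4)) := by
            apply div_le_div₀ (by positivity)
              (mul_le_mul_of_nonneg_right him_le (abs_nonneg d)) (by positivity)
            exact mul_le_mul hre2 hzre4 (by positivity) (abs_nonneg w.re)
        _ = 8 * |d| / ‖w‖ := by field_simp; ring
    rcases hsign with ⟨hw', hz'⟩ | ⟨hw', hz'⟩
    · rw [arg_of_re_pos' hz', arg_of_re_pos' hw']
      exact key
    · rcases le_or_gt 0 w.im with h | h
      · rw [arg_of_re_neg_im_nonneg' hz' (hzim ▸ h), arg_of_re_neg_im_nonneg' hw' h]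
        have : Real.arctan (z.im / z.re) + Real.pi - (Real.arctan (w.im / w.re) + Real.pi)
            = Real.arctan (z.im / z.re) - Real.arctan (w.im / w.re) := by ring
        rw [this]; exact key
      · rw [arg_of_re_neg_im_neg' hz' (hzim ▸ h), arg_of_re_neg_im_neg' hw' h]
        have : Real.arctan (z.im / z.re) - Real.pi - (Real.arctan (w.im / w.re) - Real.pi)
            = Real.arctan (z.im / z.re) - Real.arctan (w.im / w.re) := by ring
        rw [this]; exact key


private lemma abs_log_le_two_mul {x : ℝ} (hx : 1/2 ≤ x) : |Real.log x| ≤ 2 * |x - 1| := by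
  have hx0 : 0 < x := by linarith
  rcases le_or_gt 1 x with h | h
  · rw [_root_.abs_of_nonneg (Real.log_nonneg h), _root_.abs_of_nonneg (by linarith)]
    have := Real.log_le_sub_one_of_pos hx0
    linarith
  · rw [_root_.abs_of_nonpos (Real.log_nonpos hx0.le h.le), _root_.abs_of_nonpos (by linarith)]
    have h2 : Real.log x⁻¹ ≤ x⁻¹ - 1 := Real.log_le_sub_one_of_pos (by positivity)
    rw [Real.log_inv] at h2
    have h3 : x⁻¹ - 1 = (1 - x)/x := by field_simp
    rw [h3] at h2
    have h4 : (1 - x)/x ≤ 2*(1-x) := by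
      rw [div_le_iff₀ hx0]
      nlinarith
    linarith

private lemma abs_log_le_inv {t : ℝ} (ht : 0 < t) (ht1 : t ≤ 1) : |Real.log t| ≤ 1/t := by
  rw [_root_.abs_of_nonpos (Real.log_nonpos ht.le ht1)]
  have h2 : Real.log t⁻¹ ≤ t⁻¹ - 1 := Real.log_le_sub_one_of_pos (by positivity)
  rw [Real.log_inv] at h2
  have : (0:ℝ) < 1/t := by positivity
  rw [one_div]
  linarith


private lemma littleO_val_zero {E : Type} [NormedAddCommGroup E] [NormedSpace ℝ E]
    {g : ℂ → E} (h : g =o[nhds (0:ℂ)] fun c => ‖c‖ ^ 1) : g 0 = 0 := by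
  have := (isLittleO_iff.1 h one_pos).self_of_nhds
  simp at this
  exact norm_le_zero_iff.1 (by simpa using this)

private lemma contDiffOn_fderiv' {E : Type} [NormedAddCommGroup E] [NormedSpace ℝ E]
    {g : ℂ → E} {s : Set ℂ} (hs : IsOpen s) (hg : ContDiffOn ℝ (⊤ : ℕ∞) g s) :
    ContDiffOn ℝ (⊤ : ℕ∞) (fderiv ℝ g) s := fun x hx =>
  ((hg.contDiffAt (hs.mem_nhds hx)).fderiv_right (by simp)).contDiffWithinAt

/-- Key quantitative lemma: if `g` is smooth on a ball and `g = o(‖c‖^k)` for all `k`,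
then so is `fderiv ℝ g`. -/
private lemma fderiv_littleO {E : Type} [NormedAddCommGroup E] [NormedSpace ℝ E]
    (g : ℂ → E) (r : ℝ) (hr : 0 < r) (hg : ContDiffOn ℝ (⊤ : ℕ∞) g (ball (0:ℂ) r))
    (hLO : ∀ k : ℕ, g =o[nhds (0:ℂ)] fun c => ‖c‖ ^ k) :
    ∀ k : ℕ, (fderiv ℝ g) =o[nhds (0:ℂ)] fun c => ‖c‖ ^ k := by
  have hob : IsOpen (ball (0:ℂ) r) := isOpen_ball
  have hdiff : ∀ x ∈ ball (0:ℂ) r, DifferentiableAt ℝ g x := fun x hx =>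
    (hg.contDiffAt (hob.mem_nhds hx)).differentiableAt (by simp)
  have hg' : ContDiffOn ℝ (⊤ : ℕ∞) (fderiv ℝ g) (ball (0:ℂ) r) := contDiffOn_fderiv' hob hg
  have hdiff' : ∀ x ∈ ball (0:ℂ) r, DifferentiableAt ℝ (fderiv ℝ g) x := fun x hx =>
    (hg'.contDiffAt (hob.mem_nhds hx)).differentiableAt (by simp)
  have hg'' : ContDiffOn ℝ (⊤ : ℕ∞) (fderiv ℝ (fderiv ℝ g)) (ball (0:ℂ) r) :=
    contDiffOn_fderiv' hob hg'
  -- bound the second derivative on the closed ball of radius r/2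
  obtain ⟨M, hM⟩ := (isCompact_closedBall (0:ℂ) (r/2)).exists_bound_of_continuousOn (f := fderiv ℝ (fderiv ℝ g))
    ((hg''.continuousOn).mono (fun x hx => by
      simp only [mem_closedBall, mem_ball] at hx ⊢; linarith [dist_nonneg (x := x) (y := (0:ℂ))]))
  have hM0 : 0 ≤ M := le_trans (norm_nonneg _) (hM 0 (mem_closedBall_self (by positivity)))
  -- the derivative at 0 is 0
  have hg00 : g 0 = 0 := littleO_val_zero (hLO 1)
  have hd0 : fderiv ℝ g 0 = 0 := by
    have h0b : (0:ℂ) ∈ ball (0:ℂ) r := by simp [hr]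
    have : HasFDerivAt g (0 : ℂ →L[ℝ] E) 0 := by
      rw [hasFDerivAt_iff_isLittleO_nhds_zero]
      simp only [zero_add, ContinuousLinearMap.zero_apply, sub_zero, hg00]
      have h1 : g =o[nhds (0:ℂ)] fun c => ‖c‖ ^ 1 := hLO 1
      have h2 : (fun c : ℂ => ‖c‖ ^ 1) =O[nhds (0:ℂ)] fun c : ℂ => c := by
        simp only [pow_one]
        exact (isBigO_refl (fun c : ℂ => c) _).norm_left
      exact h1.trans_isBigO h2
    exact this.fderiv
  intro k
  rw [isLittleO_iff]
  intro ε hε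
  -- from hLO at order 2k+2, with constant 1
  have hval := isLittleO_iff.1 (hLO (2*k+2)) one_pos
  rw [Metric.eventually_nhds_iff] at hval
  obtain ⟨δ₀, hδ₀, hval⟩ := hval
  set K : ℝ := M + 2^(2*k+3) with hK
  have hKpos : 0 < K := by positivity
  rw [Metric.eventually_nhds_iff]
  refine ⟨min (δ₀/2) (min (r/4) (min 1 (ε/K))), by positivity, fun {c} hc => ?_⟩
  rw [dist_zero_right] at hc
  have hc1 : ‖c‖ < δ₀/2 := lt_of_lt_of_le hc (min_le_left _ _)
  have hc2 : ‖c‖ < r/4 := lt_of_lt_of_le hc (le_trans (min_le_right _ _) (min_le_left _ _))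
  have hc3 : ‖c‖ < 1 := lt_of_lt_of_le hc
    (le_trans (min_le_right _ _) (le_trans (min_le_right _ _) (min_le_left _ _)))
  have hc4 : ‖c‖ < ε/K := lt_of_lt_of_le hc
    (le_trans (min_le_right _ _) (le_trans (min_le_right _ _) (min_le_right _ _)))
  have hnrm : ‖(fun c : ℂ => ‖c‖ ^ k) c‖ = ‖c‖^k := by
    simp [_root_.abs_of_nonneg (pow_nonneg (norm_nonneg c) k)]
  rw [hnrm]
  rcases eq_or_ne c 0 with rfl | hc0
  · rw [hd0]
    simp
    positivity
  · have hn1 : 0 < ‖c‖ := norm_pos_iff.2 hc0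
    set ρ : ℝ := ‖c‖^(k+1) with hρ
    have hρpos : 0 < ρ := pow_pos hn1 _
    have hρle : ρ ≤ ‖c‖ := by
      calc ρ = ‖c‖^(k+1) := rfl
        _ ≤ ‖c‖^1 := pow_le_pow_of_le_one (norm_nonneg c) hc3.le (by omega)
        _ = ‖c‖ := pow_one _
    have hsub : closedBall c ρ ⊆ ball (0:ℂ) r := fun y hy => by
      rw [mem_closedBall] at hy
      rw [mem_ball, dist_zero_right]
      calc ‖y‖ = ‖y - c + c‖ := by ring_nf
        _ ≤ ‖y - c‖ + ‖c‖ := norm_add_le _ _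
        _ ≤ ρ + ‖c‖ := by rw [← dist_eq_norm]; exact add_le_add_left hy _
        _ ≤ 2 * ‖c‖ := by linarith
        _ < r := by linarith
    have hsub2 : closedBall c ρ ⊆ closedBall (0:ℂ) (r/2) := fun y hy => by
      rw [mem_closedBall] at hy ⊢
      rw [dist_zero_right]
      calc ‖y‖ = ‖y - c + c‖ := by ring_nf
        _ ≤ ‖y - c‖ + ‖c‖ := norm_add_le _ _
        _ ≤ ρ + ‖c‖ := by rw [← dist_eq_norm]; exact add_le_add_left hy _
        _ ≤ 2 * ‖c‖ := by linarith
        _ ≤ r/2 := by linarith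
    have hgval : ∀ y ∈ closedBall c ρ, ‖g y‖ ≤ 2^(2*k+2) * ‖c‖^(2*k+2) := by
      intro y hy
      rw [mem_closedBall] at hy
      have hyn : ‖y‖ ≤ 2 * ‖c‖ := by
        calc ‖y‖ = ‖y - c + c‖ := by ring_nf
          _ ≤ ‖y - c‖ + ‖c‖ := norm_add_le _ _
          _ ≤ ρ + ‖c‖ := by rw [← dist_eq_norm]; exact add_le_add_left hy _
          _ ≤ 2 * ‖c‖ := by linarith
      have hyd : dist y 0 < δ₀ := by
        rw [dist_zero_right]; linarith
      have := hval hyd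
      rw [one_mul] at this
      have h2 : ‖(fun c : ℂ => ‖c‖ ^ (2*k+2)) y‖ = ‖y‖^(2*k+2) := by
        simp [_root_.abs_of_nonneg (pow_nonneg (norm_nonneg y) _)]
      rw [h2] at this
      calc ‖g y‖ ≤ ‖y‖^(2*k+2) := this
        _ ≤ (2*‖c‖)^(2*k+2) := pow_le_pow_left₀ (norm_nonneg y) hyn _
        _ = 2^(2*k+2) * ‖c‖^(2*k+2) := mul_pow 2 ‖c‖ _
    -- second derivative mean value bound on the small ball
    have hmvt2 : ∀ y ∈ closedBall c ρ, ‖fderiv ℝ g y - fderiv ℝ g c‖ ≤ M * ρ := by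
      intro y hy
      have hcc : c ∈ closedBall c ρ := mem_closedBall_self hρpos.le
      have := Convex.norm_image_sub_le_of_norm_fderiv_le
        (fun x hx => hdiff' x (hsub hx))
        (fun x hx => hM x (hsub2 hx)) (convex_closedBall c ρ) hcc hy
      calc ‖fderiv ℝ g y - fderiv ℝ g c‖ ≤ M * ‖y - c‖ := this
        _ ≤ M * ρ := by
            apply mul_le_mul_of_nonneg_left _ hM0
            rw [← dist_eq_norm]; exact mem_closedBall.1 hy
    -- first order mean value for φ y = g y - (fderiv g c) y
    set f' : ℂ →L[ℝ] E := fderiv ℝ g c with hf'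
    have hmvt1 : ∀ u : ℂ, ‖u‖ = ρ →
        ‖g (c + u) - g c - f' u‖ ≤ M * ρ * ρ := by
      intro u hu
      set φ : ℂ → E := fun y => g y - f' y with hφ
      have hφd : ∀ x ∈ closedBall c ρ, DifferentiableAt ℝ φ x := fun x hx =>
        (hdiff x (hsub hx)).sub (f'.differentiableAt)
      have hφf : ∀ x ∈ closedBall c ρ, ‖fderiv ℝ φ x‖ ≤ M * ρ := by
        intro x hx
        have : fderiv ℝ φ x = fderiv ℝ g x - f' := by
          rw [hφ]
          rw [fderiv_fun_sub (hdiff x (hsub hx)) f'.differentiableAt, f'.fderiv]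
        rw [this]
        exact hmvt2 x hx
      have hcu : c + u ∈ closedBall c ρ := by
        rw [mem_closedBall, dist_eq_norm]
        simp [hu]
      have hcc : c ∈ closedBall c ρ := mem_closedBall_self hρpos.le
      have := Convex.norm_image_sub_le_of_norm_fderiv_le hφd hφf
        (convex_closedBall c ρ) hcc hcu
      have heq : φ (c + u) - φ c = g (c + u) - g c - f' u := by
        simp only [hφ]
        rw [map_add]
        abel
      rw [heq] at this
      calc ‖g (c + u) - g c - f' u‖ ≤ M * ρ * ‖c + u - c‖ := this
        _ = M * ρ * ρ := by rw [add_sub_cancel_left, hu]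
    -- combine: bound ‖f' u‖ for ‖u‖ = ρ
    have hfu : ∀ u : ℂ, ‖u‖ = ρ → ‖f' u‖ ≤ M * ρ * ρ + 2^(2*k+3) * ‖c‖^(2*k+2) := by
      intro u hu
      have h1 := hmvt1 u hu
      have hcu : c + u ∈ closedBall c ρ := by
        rw [mem_closedBall, dist_eq_norm]; simp [hu]
      have hcc : c ∈ closedBall c ρ := mem_closedBall_self hρpos.le
      have h2 := hgval (c + u) hcu
      have h3 := hgval c hcc
      calc ‖f' u‖ = ‖g (c + u) - g c - (g (c + u) - g c - f' u)‖ := by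
              rw [sub_sub_cancel]
        _ ≤ ‖g (c+u)‖ + ‖g c‖ + ‖g (c + u) - g c - f' u‖ := by
            refine le_trans (norm_sub_le _ _) ?_
            gcongr
            exact norm_sub_le _ _
        _ ≤ 2^(2*k+2) * ‖c‖^(2*k+2) + 2^(2*k+2) * ‖c‖^(2*k+2) + M * ρ * ρ := by gcongr
        _ = M * ρ * ρ + 2^(2*k+3) * ‖c‖^(2*k+2) := by ring
    -- opNorm bound
    have hop : ‖f'‖ ≤ (M * ρ * ρ + 2^(2*k+3) * ‖c‖^(2*k+2)) / ρ := by
      apply ContinuousLinearMap.opNorm_le_bound _ (by positivity)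
      intro w
      rcases eq_or_ne w 0 with rfl | hw0
      · simp
      · have hwn : 0 < ‖w‖ := norm_pos_iff.2 hw0
        set u : ℂ := (ρ / ‖w‖) • w with hu
        have hun : ‖u‖ = ρ := by
          rw [hu, norm_smul, Real.norm_eq_abs, _root_.abs_of_pos (div_pos hρpos hwn)]
          exact div_mul_cancel₀ ρ (ne_of_gt hwn)
        have hfw : f' w = (‖w‖ / ρ) • f' u := by
          rw [hu, map_smul, smul_smul]
          have he : ‖w‖ / ρ * (ρ / ‖w‖) = 1 := by
            rw [div_mul_div_comm, mul_comm ‖w‖ ρ]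
            exact div_self (ne_of_gt (by positivity))
          rw [he, one_smul]
        rw [hfw, norm_smul, norm_div, Real.norm_eq_abs, _root_.abs_of_pos hwn,
          Real.norm_eq_abs, _root_.abs_of_pos hρpos]
        calc ‖w‖ / ρ * ‖f' u‖ ≤ ‖w‖ / ρ * (M * ρ * ρ + 2^(2*k+3) * ‖c‖^(2*k+2)) := by
              apply mul_le_mul_of_nonneg_left (hfu u hun) (by positivity)
          _ = (M * ρ * ρ + 2^(2*k+3) * ‖c‖^(2*k+2)) / ρ * ‖w‖ := by field_simp
    -- finish arithmetic
    have harith : (M * ρ * ρ + 2^(2*k+3) * ‖c‖^(2*k+2)) / ρ ≤ ε * ‖c‖^k := by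
      have h1 : ‖c‖^(2*k+2) = ρ * ρ := by
        rw [hρ, ← pow_add]
        congr 1
        omega
      rw [h1]
      have e1 : (M * ρ * ρ + 2^(2*k+3) * (ρ * ρ)) / ρ = K * ρ := by
        rw [hK]; field_simp
      have h2 : ρ = ‖c‖ * ‖c‖^k := by rw [hρ, pow_succ]; ring
      rw [e1, h2]
      calc K * (‖c‖ * ‖c‖^k) = K * ‖c‖ * ‖c‖^k := by ring
        _ ≤ ε * ‖c‖^k := by
            apply mul_le_mul_of_nonneg_right _ (pow_nonneg (norm_nonneg c) k)
            calc K * ‖c‖ ≤ K * (ε/K) := mul_le_mul_of_nonneg_left hc4.le hKpos.le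
              _ = ε := by field_simp
    exact le_trans hop harith


/-- flat at 0 implies all-order littleO -/
private lemma littleO_of_flat (k : ℕ) :
    ∀ {E : Type} [NormedAddCommGroup E] [NormedSpace ℝ E] (g : ℂ → E) (r : ℝ),
      0 < r → ContDiffOn ℝ (⊤ : ℕ∞) g (ball (0:ℂ) r) →
      (∀ n : ℕ, iteratedFDeriv ℝ n g 0 = 0) →
      g =o[nhds (0:ℂ)] fun c => ‖c‖ ^ k := by
  induction k with
  | zero =>
    intro E _ _ g r hr hg hflat
    have h0 : g 0 = 0 := by
      rw [← norm_eq_zero, ← norm_iteratedFDeriv_zero (𝕜 := ℝ), hflat 0, norm_zero]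
    have : (fun c : ℂ => ‖c‖ ^ 0) = fun _ => (1:ℝ) := funext fun c => pow_zero _
    rw [this, isLittleO_one_iff]
    have hc : ContinuousAt g 0 :=
      (hg.contDiffAt (isOpen_ball.mem_nhds (by simp [hr]))).continuousAt
    simpa [h0] using hc.tendsto
  | succ k ih =>
    intro E _ _ g r hr hg hflat
    have hflat' : ∀ n : ℕ, iteratedFDeriv ℝ n (fderiv ℝ g) 0 = 0 := by
      intro n
      rw [← norm_eq_zero, norm_iteratedFDeriv_fderiv (𝕜 := ℝ), hflat (n+1), norm_zero]
    have hg' : ContDiffOn ℝ (⊤ : ℕ∞) (fderiv ℝ g) (ball (0:ℂ) r) := contDiffOn_fderiv' isOpen_ball hg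
    have ihd := ih (fderiv ℝ g) r hr hg' hflat'
    have h0 : g 0 = 0 := by
      rw [← norm_eq_zero, ← norm_iteratedFDeriv_zero (𝕜 := ℝ), hflat 0, norm_zero]
    rw [isLittleO_iff]
    intro ε hε
    have hev := isLittleO_iff.1 ihd hε
    rw [Metric.eventually_nhds_iff] at hev
    obtain ⟨δ₁, hδ₁, hev⟩ := hev
    rw [Metric.eventually_nhds_iff]
    refine ⟨min δ₁ (r/2), by positivity, fun {c} hc => ?_⟩
    rw [dist_zero_right] at hc
    have hc1 : ‖c‖ < δ₁ := lt_of_lt_of_le hc (min_le_left _ _)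
    have hc2 : ‖c‖ < r/2 := lt_of_lt_of_le hc (min_le_right _ _)
    have hsub : closedBall (0:ℂ) ‖c‖ ⊆ ball (0:ℂ) r := fun y hy => by
      rw [mem_closedBall, dist_zero_right] at hy
      rw [mem_ball, dist_zero_right]
      linarith
    have hbd : ∀ y ∈ closedBall (0:ℂ) ‖c‖, ‖fderiv ℝ g y‖ ≤ ε * ‖c‖^k := by
      intro y hy
      rw [mem_closedBall, dist_zero_right] at hy
      have := hev (show dist y 0 < δ₁ by rw [dist_zero_right]; linarith)
      have h2 : ‖(fun c : ℂ => ‖c‖ ^ k) y‖ = ‖y‖^k := by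
        simp [_root_.abs_of_nonneg (pow_nonneg (norm_nonneg y) k)]
      rw [h2] at this
      calc ‖fderiv ℝ g y‖ ≤ ε * ‖y‖^k := this
        _ ≤ ε * ‖c‖^k := by
            apply mul_le_mul_of_nonneg_left _ hε.le
            exact pow_le_pow_left₀ (norm_nonneg y) hy k
    have := Convex.norm_image_sub_le_of_norm_fderiv_le
      (fun x hx => (hg.contDiffAt (isOpen_ball.mem_nhds (hsub hx))).differentiableAt (by simp))
      hbd (convex_closedBall (0:ℂ) ‖c‖)
      (mem_closedBall_self (norm_nonneg c))
      (mem_closedBall.2 (by rw [dist_zero_right]))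
    rw [h0, sub_zero, sub_zero] at this
    have h3 : ‖(fun c : ℂ => ‖c‖ ^ (k+1)) c‖ = ‖c‖^(k+1) := by
      simp [_root_.abs_of_nonneg (pow_nonneg (norm_nonneg c) _)]
    rw [h3]
    calc ‖g c‖ ≤ ε * ‖c‖^k * ‖c‖ := this
      _ = ε * ‖c‖^(k+1) := by rw [pow_succ]; ring

/-- all-order littleO plus smoothness implies flat at 0 -/
private lemma flat_of_littleO (n : ℕ) :
    ∀ {E : Type} [NormedAddCommGroup E] [NormedSpace ℝ E] (g : ℂ → E) (r : ℝ),
      0 < r → ContDiffOn ℝ (⊤ : ℕ∞) g (ball (0:ℂ) r) →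
      (∀ k : ℕ, g =o[nhds (0:ℂ)] fun c => ‖c‖ ^ k) →
      iteratedFDeriv ℝ n g 0 = 0 := by
  induction n with
  | zero =>
    intro E _ _ g r hr hg hLO
    have h0 : g 0 = 0 := littleO_val_zero (hLO 1)
    rw [← norm_eq_zero, norm_iteratedFDeriv_zero (𝕜 := ℝ), h0, norm_zero]
  | succ n ih =>
    intro E _ _ g r hr hg hLO
    have hg' : ContDiffOn ℝ (⊤ : ℕ∞) (fderiv ℝ g) (ball (0:ℂ) r) := contDiffOn_fderiv' isOpen_ball hg
    have hLO' := fderiv_littleO g r hr hg hLO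
    have hihz := ih (fderiv ℝ g) r hr hg' hLO'
    rw [← norm_eq_zero, ← norm_iteratedFDeriv_fderiv (𝕜 := ℝ), hihz, norm_zero]

/-- glue: punctured littleO + smoothness near 0 gives flatness -/
private lemma flat_of_punctured_littleO {p : ℂ → ℝ} {U : Set ℂ} (hU : U ∈ nhds (0:ℂ))
    (hp : ContDiffOn ℝ (⊤ : ℕ∞) p U)
    (h : ∀ k : ℕ, p =o[nhdsWithin (0:ℂ) {(0:ℂ)}ᶜ] fun c => ‖c‖ ^ k) :
    ∀ n : ℕ, iteratedFDeriv ℝ n p 0 = 0 := by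
  have hca : ContinuousAt p 0 := (hp.contDiffAt hU).continuousAt
  have hp0 : p 0 = 0 := by
    have ht1 : Tendsto p (nhdsWithin (0:ℂ) {(0:ℂ)}ᶜ) (nhds (p 0)) :=
      hca.continuousWithinAt.tendsto
    have ht2 : Tendsto p (nhdsWithin (0:ℂ) {(0:ℂ)}ᶜ) (nhds 0) := by
      apply (h 1).tendsto_zero_of_tendsto
      have : Tendsto (fun c : ℂ => ‖c‖ ^ 1) (nhds (0:ℂ)) (nhds 0) := by
        simpa using (continuous_norm.tendsto (0:ℂ)).pow 1
      exact this.mono_left nhdsWithin_le_nhds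
    exact tendsto_nhds_unique ht1 ht2
  have h' : ∀ k : ℕ, p =o[nhds (0:ℂ)] fun c => ‖c‖ ^ k := by
    intro k
    rw [isLittleO_iff]
    intro ε hε
    have := isLittleO_iff.1 (h k) hε
    rw [eventually_nhdsWithin_iff] at this
    filter_upwards [this] with c hc
    rcases eq_or_ne c 0 with rfl | hc0
    · simp [hp0]
      positivity
    · exact hc (by simpa using hc0)
  obtain ⟨r, hr, hrU⟩ := Metric.mem_nhds_iff.1 hU
  exact fun n => flat_of_littleO n p r hr (hp.mono hrU) h'



set_option maxHeartbeats 2000000 in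
/-- If G = (G₁,G₂) is a local diffeomorphism of (ℝ²,0) ≅ (ℂ,0) with G₂ = c₂ and
G₁ − c₁ flat at 0, τ = σ + Re(ln c)dc₁ − Im(ln c)dc₂ with σ smooth, and
π = G*τ − τ has smooth coefficients p₁, p₂ near 0, then p₁, p₂ are flat at 0. -/
theorem pullback_difference_flat (G : ℂ → ℂ) (σ₁ σ₂ p₁ p₂ : ℂ → ℝ) (U : Set ℂ)
    (hU : U ∈ nhds (0 : ℂ))
    (hG : ContDiffOn ℝ (⊤ : ℕ∞) G U) (hG0 : G 0 = 0)
    (hGdiffeo : ∃ Ginv : ℂ → ℂ, ∀ᶠ c in nhds (0 : ℂ), Ginv (G c) = c ∧ G (Ginv c) = c)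
    (hG2 : ∀ c, (G c).im = c.im)
    (hG1flat : ∀ n : ℕ, iteratedFDeriv ℝ n (fun c => (G c).re - c.re) 0 = 0)
    (hσ₁ : ContDiffOn ℝ (⊤ : ℕ∞) σ₁ U) (hσ₂ : ContDiffOn ℝ (⊤ : ℕ∞) σ₂ U)
    (hp₁ : ContDiffOn ℝ (⊤ : ℕ∞) p₁ U) (hp₂ : ContDiffOn ℝ (⊤ : ℕ∞) p₂ U)
    -- τ₁ = σ₁ + ln|c|,  τ₂ = σ₂ − arg c ;  π = G*τ − τ
    (hπ₁ : ∀ c ∈ U, c ≠ 0 →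
      p₁ c = (σ₁ (G c) + Real.log (‖G c‖))
              * fderiv ℝ (fun w => (G w).re) c 1
           + (σ₂ (G c) - Complex.arg (G c)) * fderiv ℝ (fun w => (G w).im) c 1
           - (σ₁ c + Real.log (‖c‖)))
    (hπ₂ : ∀ c ∈ U, c ≠ 0 →
      p₂ c = (σ₁ (G c) + Real.log (‖G c‖))
              * fderiv ℝ (fun w => (G w).re) c Complex.I
           + (σ₂ (G c) - Complex.arg (G c)) * fderiv ℝ (fun w => (G w).im) c Complex.I
           - (σ₂ c - Complex.arg c)) :
    (∀ n : ℕ, iteratedFDeriv ℝ n p₁ 0 = 0) ∧ (∀ n : ℕ, iteratedFDeriv ℝ n p₂ 0 = 0) := by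
  clear hGdiffeo hG0
  set f : ℂ → ℝ := fun c => (G c).re - c.re with hfdef
  obtain ⟨r, hr, hrU⟩ := Metric.mem_nhds_iff.1 hU
  set l := nhdsWithin (0:ℂ) {(0:ℂ)}ᶜ with hldef
  -- smoothness of f on the ball
  have hGb : ContDiffOn ℝ (⊤ : ℕ∞) G (ball (0:ℂ) r) := hG.mono hrU
  have hfs : ContDiffOn ℝ (⊤ : ℕ∞) f (ball (0:ℂ) r) := by
    have h1 : ContDiffOn ℝ (⊤ : ℕ∞) (fun c : ℂ => (G c).re) (ball (0:ℂ) r) :=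
      Complex.reCLM.contDiff.comp_contDiffOn hGb
    have h2 : ContDiffOn ℝ (⊤ : ℕ∞) (fun c : ℂ => c.re) (ball (0:ℂ) r) :=
      Complex.reCLM.contDiff.contDiffOn
    exact h1.sub h2
  have hfd : ∀ c ∈ ball (0:ℂ) r, DifferentiableAt ℝ f c := fun c hc =>
    (hfs.contDiffAt (isOpen_ball.mem_nhds hc)).differentiableAt (by simp)
  -- littleO facts for f and its derivative
  have LOf : ∀ k : ℕ, f =o[nhds (0:ℂ)] fun c => ‖c‖ ^ k :=
    fun k => littleO_of_flat k f r hr hfs hG1flat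
  have LOf' : ∀ k : ℕ, (fderiv ℝ f) =o[nhds (0:ℂ)] fun c => ‖c‖ ^ k :=
    fderiv_littleO f r hr hfs LOf
  -- derivative computations
  have hResplit : (fun w : ℂ => (G w).re) = fun w => f w + Complex.reCLM w := by
    funext w
    simp [hfdef]
  have hImeq : (fun w : ℂ => (G w).im) = fun w => Complex.imCLM w := by
    funext w
    rw [hG2 w]
    rfl
  have hImDeriv : ∀ c : ℂ, fderiv ℝ (fun w : ℂ => (G w).im) c = Complex.imCLM := by
    intro c
    rw [hImeq]
    exact Complex.imCLM.fderiv
  have hReDeriv : ∀ c ∈ ball (0:ℂ) r,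
      fderiv ℝ (fun w : ℂ => (G w).re) c = fderiv ℝ f c + Complex.reCLM := by
    intro c hc
    rw [hResplit, fderiv_fun_add (hfd c hc) Complex.reCLM.differentiableAt,
      Complex.reCLM.fderiv]
  -- G c = c + f c
  have hGeq : ∀ c : ℂ, G c = c + (f c : ℂ) := by
    intro c
    apply Complex.ext
    · simp [hfdef]
    · simp [hG2 c]
  -- bounds for σ₁, σ₂ on the closed ball of radius r/2
  set r₁ : ℝ := r/2 with hr₁def
  have hr₁ : 0 < r₁ := by positivity
  have hsubB : closedBall (0:ℂ) r₁ ⊆ ball (0:ℂ) r := fun y hy => by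
    rw [mem_closedBall, dist_zero_right] at hy
    rw [mem_ball, dist_zero_right]
    linarith
  have hσ₁b : ContDiffOn ℝ (⊤ : ℕ∞) σ₁ (ball (0:ℂ) r) := hσ₁.mono hrU
  have hσ₂b : ContDiffOn ℝ (⊤ : ℕ∞) σ₂ (ball (0:ℂ) r) := hσ₂.mono hrU
  obtain ⟨M₁, hM₁⟩ := (isCompact_closedBall (0:ℂ) r₁).exists_bound_of_continuousOn
    (((contDiffOn_fderiv' isOpen_ball hσ₁b).continuousOn).mono hsubB)
  obtain ⟨M₂, hM₂⟩ := (isCompact_closedBall (0:ℂ) r₁).exists_bound_of_continuousOn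
    (((contDiffOn_fderiv' isOpen_ball hσ₂b).continuousOn).mono hsubB)
  obtain ⟨Mσ, hMσ⟩ := (isCompact_closedBall (0:ℂ) r₁).exists_bound_of_continuousOn
    ((hσ₁b.continuousOn).mono hsubB)
  have hM₁0 : 0 ≤ M₁ := le_trans (norm_nonneg _) (hM₁ 0 (mem_closedBall_self hr₁.le))
  have hM₂0 : 0 ≤ M₂ := le_trans (norm_nonneg _) (hM₂ 0 (mem_closedBall_self hr₁.le))
  have hMσ0 : 0 ≤ Mσ := le_trans (norm_nonneg _) (hMσ 0 (mem_closedBall_self hr₁.le))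
  have hLip₁ : ∀ x ∈ closedBall (0:ℂ) r₁, ∀ y ∈ closedBall (0:ℂ) r₁,
      |σ₁ x - σ₁ y| ≤ M₁ * ‖x - y‖ := by
    intro x hx y hy
    have := Convex.norm_image_sub_le_of_norm_fderiv_le
      (fun z hz => (hσ₁b.contDiffAt (isOpen_ball.mem_nhds (hsubB hz))).differentiableAt (by simp))
      hM₁ (convex_closedBall (0:ℂ) r₁) hy hx
    simpa [Real.norm_eq_abs] using this
  have hLip₂ : ∀ x ∈ closedBall (0:ℂ) r₁, ∀ y ∈ closedBall (0:ℂ) r₁,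
      |σ₂ x - σ₂ y| ≤ M₂ * ‖x - y‖ := by
    intro x hx y hy
    have := Convex.norm_image_sub_le_of_norm_fderiv_le
      (fun z hz => (hσ₂b.contDiffAt (isOpen_ball.mem_nhds (hsubB hz))).differentiableAt (by simp))
      hM₂ (convex_closedBall (0:ℂ) r₁) hy hx
    simpa [Real.norm_eq_abs] using this
  -- eventual facts in the punctured filter
  have hev_norm : ∀ δ : ℝ, 0 < δ → ∀ᶠ c in l, ‖c‖ < δ := by
    intro δ hδ
    apply Eventually.filter_mono nhdsWithin_le_nhds
    exact Metric.eventually_nhds_iff.2 ⟨δ, hδ, fun {y} hy => by rwa [dist_zero_right] at hy⟩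
  have hev_ne : ∀ᶠ c in l, c ≠ 0 :=
    eventually_mem_nhdsWithin.mono (fun c hc => by simpa using hc)
  have hev_f : ∀ (k : ℕ) (η : ℝ), 0 < η → ∀ᶠ c in l, |f c| ≤ η * ‖c‖^k := by
    intro k η hη
    apply Eventually.filter_mono nhdsWithin_le_nhds
    filter_upwards [isLittleO_iff.1 (LOf k) hη] with c hc
    rw [Real.norm_eq_abs] at hc
    calc |f c| ≤ η * ‖‖c‖^k‖ := hc
      _ = η * ‖c‖^k := by rw [Real.norm_eq_abs, _root_.abs_of_nonneg (pow_nonneg (norm_nonneg c) k)]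
  have hev_df : ∀ (k : ℕ) (η : ℝ), 0 < η → ∀ᶠ c in l, ‖fderiv ℝ f c‖ ≤ η * ‖c‖^k := by
    intro k η hη
    apply Eventually.filter_mono nhdsWithin_le_nhds
    filter_upwards [isLittleO_iff.1 (LOf' k) hη] with c hc
    calc ‖fderiv ℝ f c‖ ≤ η * ‖‖c‖^k‖ := hc
      _ = η * ‖c‖^k := by rw [Real.norm_eq_abs, _root_.abs_of_nonneg (pow_nonneg (norm_nonneg c) k)]
  -- the main quantitative bound
  have key : ∀ (n : ℕ) (ε : ℝ), 0 < ε → ∀ᶠ c in l,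
      |p₁ c| ≤ ε * ‖c‖^n ∧ |p₂ c| ≤ ε * ‖c‖^n := by
    intro n ε hε
    set ε₁ : ℝ := ε / (M₁ + M₂ + 12) with hε₁def
    have hε₁ : 0 < ε₁ := by positivity
    set δ : ℝ := min (r₁/4) (min (1/2) (1/(Mσ+1))) with hδdef
    have hδ : 0 < δ := by positivity
    filter_upwards [hev_norm δ hδ, hev_ne, hev_f 1 (1/4) (by norm_num),
      hev_f (n+1) ε₁ hε₁, hev_df (n+1) ε₁ hε₁] with c hcδ hc0 hcf4 hcf hcdf
    -- basic facts about c
    have hcpos : 0 < ‖c‖ := norm_pos_iff.2 hc0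
    have hcn1 : ‖c‖ < r₁/4 := lt_of_lt_of_le hcδ (min_le_left _ _)
    have hcn2 : ‖c‖ < 1/2 := lt_of_lt_of_le hcδ
      (le_trans (min_le_right _ _) (min_le_left _ _))
    have hcn3 : ‖c‖ < 1/(Mσ+1) := lt_of_lt_of_le hcδ
      (le_trans (min_le_right _ _) (min_le_right _ _))
    have hcb : c ∈ ball (0:ℂ) r := by
      rw [mem_ball, dist_zero_right]
      have : r₁/4 < r := by rw [hr₁def]; linarith
      linarith
    have hcU : c ∈ U := hrU hcb
    have hcB : c ∈ closedBall (0:ℂ) r₁ := by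
      rw [mem_closedBall, dist_zero_right]
      linarith
    have habs : ‖c‖ = ‖c‖ := rfl
    have hf4 : |f c| ≤ ‖c‖/4 := by
      calc |f c| ≤ (1/4) * ‖c‖^1 := hcf4
        _ = ‖c‖/4 := by rw [pow_one]; ring
    have hGc : G c - c = ((f c : ℝ) : ℂ) := by rw [hGeq c]; ring
    have hGcn : ‖G c - c‖ = |f c| := by
      rw [hGc, Complex.norm_real, Real.norm_eq_abs]
    have hfa : |‖G c‖ - ‖c‖| ≤ |f c| := by
      have := abs_norm_sub_norm_le (G c) c
      rw [hGc] at this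
      rw [Complex.norm_real, Real.norm_eq_abs] at this
      exact this
    have hfa' := abs_le.1 hfa
    have hGlb : ‖c‖/2 ≤ ‖G c‖ := by
      rw [habs] at hfa'
      linarith [hfa'.1]
    have hGub : ‖G c‖ ≤ 2 * ‖c‖ := by
      rw [habs] at hfa'
      linarith [hfa'.2]
    have hGpos : 0 < ‖G c‖ := by linarith
    have hGcB : G c ∈ closedBall (0:ℂ) r₁ := by
      rw [mem_closedBall, dist_zero_right]
      have h : ‖G c‖ = ‖G c‖ := rfl
      rw [h]
      linarith
    -- term bounds
    have T1 : |σ₁ (G c) - σ₁ c| ≤ M₁ * |f c| := by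
      have := hLip₁ (G c) hGcB c hcB
      rwa [hGcn] at this
    have T1' : |σ₂ (G c) - σ₂ c| ≤ M₂ * |f c| := by
      have := hLip₂ (G c) hGcB c hcB
      rwa [hGcn] at this
    have T2 : |Real.log (‖G c‖) - Real.log (‖c‖)|
        ≤ 4 * (|f c| / ‖c‖) := by
      rw [← Real.log_div (ne_of_gt hGpos) (ne_of_gt (habs ▸ hcpos))]
      have hx : 1/2 ≤ ‖G c‖ / ‖c‖ := by
        rw [habs, le_div_iff₀ hcpos]
        linarith
      have h2 : |‖G c‖ / ‖c‖ - 1| =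
          |‖G c‖ - ‖c‖| / ‖c‖ := by
        have he : ‖G c‖ / ‖c‖ - 1
            = (‖G c‖ - ‖c‖)/‖c‖ := by
          have hcane : ‖c‖ ≠ 0 := ne_of_gt hcpos
          field_simp
        rw [he, abs_div, _root_.abs_of_pos hcpos]
      calc |Real.log (‖G c‖ / ‖c‖)|
          ≤ 2 * |‖G c‖ / ‖c‖ - 1| := abs_log_le_two_mul hx
        _ = 2 * (|‖G c‖ - ‖c‖| / ‖c‖) := by rw [h2]
        _ ≤ 2 * (|f c| / ‖c‖) := by
            apply mul_le_mul_of_nonneg_left _ (by norm_num)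
            exact div_le_div_of_nonneg_right hfa hcpos.le
        _ ≤ 4 * (|f c| / ‖c‖) := by
            have : 0 ≤ |f c| / ‖c‖ := by positivity
            linarith
    have T3 : |σ₁ (G c) + Real.log (‖G c‖)| ≤ 3 / ‖c‖ := by
      have h1 : |σ₁ (G c)| ≤ 1/‖c‖ := by
        have ha : |σ₁ (G c)| ≤ Mσ := by
          have := hMσ (G c) hGcB
          rwa [Real.norm_eq_abs] at this
        have hb : Mσ + 1 ≤ 1/‖c‖ := by
          rw [le_div_iff₀ hcpos]
          have := (lt_div_iff₀ (show (0:ℝ) < Mσ+1 by linarith)).1 hcn3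
          nlinarith
        linarith
      have h2 : |Real.log (‖G c‖)| ≤ 2/‖c‖ := by
        have ha : ‖G c‖ ≤ 1 := by linarith
        calc |Real.log (‖G c‖)| ≤ 1/(‖G c‖) :=
              abs_log_le_inv hGpos ha
          _ ≤ 1/(‖c‖/2) := one_div_le_one_div_of_le (by positivity) hGlb
          _ = 2/‖c‖ := by field_simp
      calc |σ₁ (G c) + Real.log (‖G c‖)|
          ≤ |σ₁ (G c)| + |Real.log (‖G c‖)| := abs_add_le _ _
        _ ≤ 1/‖c‖ + 2/‖c‖ := add_le_add h1 h2
        _ = 3/‖c‖ := by ring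
    have T5 : |Complex.arg c - Complex.arg (G c)| ≤ 8 * (|f c| / ‖c‖) := by
      have h := arg_add_real_sub_arg c (f c) hc0 (by rw [habs]; linarith)
      rw [← hGeq c] at h
      rw [abs_sub_comm]
      calc |Complex.arg (G c) - Complex.arg c| ≤ 8 * |f c| / ‖c‖ := h
        _ = 8 * (|f c| / ‖c‖) := by rw [habs, mul_div_assoc]
    -- derivative value bounds
    have hDf1 : |fderiv ℝ f c 1| ≤ ε₁ * ‖c‖^(n+1) := by
      calc |fderiv ℝ f c 1| = ‖fderiv ℝ f c 1‖ := (Real.norm_eq_abs _).symm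
        _ ≤ ‖fderiv ℝ f c‖ * ‖(1:ℂ)‖ := (fderiv ℝ f c).le_opNorm 1
        _ = ‖fderiv ℝ f c‖ := by rw [norm_one, mul_one]
        _ ≤ ε₁ * ‖c‖^(n+1) := hcdf
    have hDfI : |fderiv ℝ f c Complex.I| ≤ ε₁ * ‖c‖^(n+1) := by
      calc |fderiv ℝ f c Complex.I| = ‖fderiv ℝ f c Complex.I‖ := (Real.norm_eq_abs _).symm
        _ ≤ ‖fderiv ℝ f c‖ * ‖Complex.I‖ := (fderiv ℝ f c).le_opNorm Complex.I
        _ = ‖fderiv ℝ f c‖ := by rw [Complex.norm_I, mul_one]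
        _ ≤ ε₁ * ‖c‖^(n+1) := hcdf
    have hcle1 : ‖c‖ ≤ 1 := by linarith
    have hεsum : (M₁ + M₂ + 12) * ε₁ = ε := by
      rw [hε₁def]
      field_simp
    constructor
    · -- p₁ bound
      have hp1c : p₁ c = (σ₁ (G c) - σ₁ c)
          + (Real.log (‖G c‖) - Real.log (‖c‖))
          + (σ₁ (G c) + Real.log (‖G c‖)) * (fderiv ℝ f c 1) := by
        rw [hπ₁ c hcU hc0, hReDeriv c hcb, hImDeriv c]
        simp only [ContinuousLinearMap.add_apply, Complex.reCLM_apply,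
          Complex.imCLM_apply, Complex.one_re, Complex.one_im]
        ring
      calc |p₁ c| ≤ |σ₁ (G c) - σ₁ c|
            + |Real.log (‖G c‖) - Real.log (‖c‖)|
            + |σ₁ (G c) + Real.log (‖G c‖)| * |fderiv ℝ f c 1| := by
            rw [hp1c]
            refine le_trans (abs_add_le _ _) ?_
            rw [abs_mul]
            exact add_le_add_left (abs_add_le _ _) _
        _ ≤ M₁ * (ε₁ * ‖c‖^(n+1)) + 4 * ((ε₁ * ‖c‖^(n+1)) / ‖c‖)
            + (3/‖c‖) * (ε₁ * ‖c‖^(n+1)) := by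
            refine add_le_add (add_le_add ?_ ?_) ?_
            · exact le_trans T1 (mul_le_mul_of_nonneg_left hcf hM₁0)
            · refine le_trans T2 ?_
              apply mul_le_mul_of_nonneg_left _ (by norm_num)
              exact div_le_div_of_nonneg_right hcf hcpos.le
            · exact mul_le_mul T3 hDf1 (abs_nonneg _) (by positivity)
        _ = M₁ * ε₁ * ‖c‖^n * ‖c‖ + 7 * (ε₁ * ‖c‖^n) := by
            have hne : ‖c‖ ≠ 0 := ne_of_gt hcpos
            rw [pow_succ]
            field_simp
            ring
        _ ≤ M₁ * ε₁ * ‖c‖^n + 7 * (ε₁ * ‖c‖^n) := by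
            have h0 : 0 ≤ M₁ * ε₁ * ‖c‖^n := by positivity
            nlinarith
        _ = (M₁ + 7) * ε₁ * ‖c‖^n := by ring
        _ ≤ ε * ‖c‖^n := by
            apply mul_le_mul_of_nonneg_right _ (pow_nonneg (norm_nonneg c) n)
            nlinarith
    · -- p₂ bound
      have hp2c : p₂ c = (σ₁ (G c) + Real.log (‖G c‖)) * (fderiv ℝ f c Complex.I)
          + (σ₂ (G c) - σ₂ c) + (Complex.arg c - Complex.arg (G c)) := by
        rw [hπ₂ c hcU hc0, hReDeriv c hcb, hImDeriv c]
        simp only [ContinuousLinearMap.add_apply, Complex.reCLM_apply,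
          Complex.imCLM_apply, Complex.I_re, Complex.I_im]
        ring
      calc |p₂ c| ≤ |σ₁ (G c) + Real.log (‖G c‖)| * |fderiv ℝ f c Complex.I|
            + |σ₂ (G c) - σ₂ c| + |Complex.arg c - Complex.arg (G c)| := by
            rw [hp2c]
            refine le_trans (abs_add_le _ _) ?_
            refine add_le_add_left (le_trans (abs_add_le _ _) ?_) _
            rw [abs_mul]
        _ ≤ (3/‖c‖) * (ε₁ * ‖c‖^(n+1)) + M₂ * (ε₁ * ‖c‖^(n+1))
            + 8 * ((ε₁ * ‖c‖^(n+1)) / ‖c‖) := by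
            refine add_le_add (add_le_add ?_ ?_) ?_
            · exact mul_le_mul T3 hDfI (abs_nonneg _) (by positivity)
            · exact le_trans T1' (mul_le_mul_of_nonneg_left hcf hM₂0)
            · refine le_trans T5 ?_
              apply mul_le_mul_of_nonneg_left _ (by norm_num)
              exact div_le_div_of_nonneg_right hcf hcpos.le
        _ = M₂ * ε₁ * ‖c‖^n * ‖c‖ + 11 * (ε₁ * ‖c‖^n) := by
            have hne : ‖c‖ ≠ 0 := ne_of_gt hcpos
            rw [pow_succ]
            field_simp
            ring
        _ ≤ M₂ * ε₁ * ‖c‖^n + 11 * (ε₁ * ‖c‖^n) := by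
            have h0 : 0 ≤ M₂ * ε₁ * ‖c‖^n := by positivity
            nlinarith
        _ = (M₂ + 11) * ε₁ * ‖c‖^n := by ring
        _ ≤ ε * ‖c‖^n := by
            apply mul_le_mul_of_nonneg_right _ (pow_nonneg (norm_nonneg c) n)
            nlinarith
  -- conclude
  have claim₁ : ∀ k : ℕ, p₁ =o[l] fun c => ‖c‖ ^ k := by
    intro k
    rw [isLittleO_iff]
    intro ε hε
    filter_upwards [key k ε hε] with c hc
    rw [Real.norm_eq_abs, Real.norm_eq_abs,
      _root_.abs_of_nonneg (pow_nonneg (norm_nonneg c) k)]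
    exact hc.1
  have claim₂ : ∀ k : ℕ, p₂ =o[l] fun c => ‖c‖ ^ k := by
    intro k
    rw [isLittleO_iff]
    intro ε hε
    filter_upwards [key k ε hε] with c hc
    rw [Real.norm_eq_abs, Real.norm_eq_abs,
      _root_.abs_of_nonneg (pow_nonneg (norm_nonneg c) k)]
    exact hc.2
  exact ⟨flat_of_punctured_littleO hU hp₁ claim₁, flat_of_punctured_littleO hU hp₂ claim₂⟩
end
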